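/- Let A be a commutative multiplicative hyperring with identity that is not local, let Q be a strong 𝒞-hyperideal of A, and let u,v ∈ ℕ with u > v. Then Q is a (u−v+1,1)-absorbing prime hyperideal of A if and only if Q is a prime hyperideal of A. -/

import Mathlib

/-- A commutative multiplicative hyperring with identity: `(A,+)` is a commutative group,
`∘ = hmul` is a commutative associative hyperoperation with nonempty values, satisfying
`x∘(y+z) ⊆ x∘y + x∘z`, `x∘(−y) = (−x)∘y = −(x∘y)`, and `a ∈ a∘1` for all `a`. -/
class CommHyperring (A : Type*) [AddCommGroup A] [One A] where
  hmul : A → A → Set A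
  hmul_nonempty : ∀ x y : A, (hmul x y).Nonempty
  hmul_comm : ∀ x y : A, hmul x y = hmul y x
  hmul_assoc : ∀ x y z : A, (⋃ a ∈ hmul y z, hmul x a) = ⋃ b ∈ hmul x y, hmul b z
  hmul_add : ∀ x y z : A, hmul x (y + z) ⊆ Set.image2 (· + ·) (hmul x y) (hmul x z)
  hmul_neg : ∀ x y : A, hmul x (-y) = Neg.neg '' hmul x y
  neg_hmul : ∀ x y : A, hmul (-x) y = Neg.neg '' hmul x y
  one_mem : ∀ a : A, a ∈ hmul a 1

open CommHyperring

variable {A : Type*} [AddCommGroup A] [One A] [CommHyperring A]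

/-- The hyperoperation extended to subsets: `X∘Y = ⋃_{x∈X, y∈Y} x∘y`. -/
def sMul (X Y : Set A) : Set A := ⋃ x ∈ X, ⋃ y ∈ Y, hmul x y

/-- The product `x₁∘⋯∘xₙ` of the members of a list. -/
def hProd : List A → Set A
  | [] => {1}
  | [a] => {a}
  | a :: l => ⋃ c ∈ hProd l, hmul a c

/-- `xⁿ = x∘⋯∘x` (`n` factors). -/
def hPow (a : A) (n : ℕ) : Set A := hProd (List.replicate n a)

/-- `a` is a unit if `1 ∈ a∘b` for some `b`. -/
def IsUnitH (a : A) : Prop := ∃ b : A, (1 : A) ∈ hmul a b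

/-- A hyperideal of `A`. -/
def IsHyperideal (B : Set A) : Prop :=
  B.Nonempty ∧ (∀ x ∈ B, ∀ y ∈ B, x - y ∈ B) ∧ ∀ r : A, ∀ x ∈ B, hmul r x ⊆ B

def IsProperHyperideal (B : Set A) : Prop := IsHyperideal B ∧ B ≠ Set.univ

/-- A prime hyperideal. -/
def IsPrimeHyperideal (B : Set A) : Prop :=
  IsProperHyperideal B ∧ ∀ x y : A, hmul x y ⊆ B → x ∈ B ∨ y ∈ B

/-- The prime radical: the intersection of all prime hyperideals containing `B`
(`= A` if there are none). -/
def radH (B : Set A) : Set A := ⋂₀ {P : Set A | IsPrimeHyperideal P ∧ B ⊆ P}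

/-- A `𝒞`-hyperideal: meets a finite product `⇒` contains it. -/
def IsCHyperideal (B : Set A) : Prop :=
  IsHyperideal B ∧ ∀ l : List A, l ≠ [] → (hProd l ∩ B).Nonempty → hProd l ⊆ B

def setAdd (X Y : Set A) : Set A := Set.image2 (· + ·) X Y

/-- The sum `C₁ + ⋯ + Cₙ` of the finite products coded by a list of lists. -/
def sumProds (L : List (List A)) : Set A := L.foldr (fun l S => setAdd (hProd l) S) {0}

/-- A strong `𝒞`-hyperideal: meets a finite sum of finite products `⇒` contains it. -/
def IsStrongCHyperideal (B : Set A) : Prop :=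
  IsHyperideal B ∧ ∀ L : List (List A), L ≠ [] → (∀ l ∈ L, l ≠ []) →
    (sumProds L ∩ B).Nonempty → sumProds L ⊆ B

/-- A `v`-absorbing hyperideal. -/
def IsNAbsorbing (Q : Set A) (v : ℕ) : Prop :=
  IsProperHyperideal Q ∧ ∀ l : List A, l.length = v + 1 → hProd l ⊆ Q →
    ∃ l', l'.Sublist l ∧ l'.length = v ∧ hProd l' ⊆ Q

/-- A `(u,v)`-absorbing hyperideal. -/
def IsUVAbsorbing (Q : Set A) (u v : ℕ) : Prop :=
  IsProperHyperideal Q ∧ ∀ l : List A, l.length = u → (∀ x ∈ l, ¬IsUnitH x) → hProd l ⊆ Q →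
    ∃ l', l'.Sublist l ∧ l'.length = v ∧ hProd l' ⊆ Q

/-- An `AB`-`(u,v)`-absorbing hyperideal. -/
def IsABUVAbsorbing (Q : Set A) (u v : ℕ) : Prop :=
  IsProperHyperideal Q ∧ ∀ l : List A, l.length = u → hProd l ⊆ Q →
    ∃ l', l'.Sublist l ∧ l'.length = v ∧ hProd l' ⊆ Q

/-- A `(u,v)`-absorbing prime hyperideal. -/
def IsUVAbsorbingPrime (Q : Set A) (u v : ℕ) : Prop :=
  IsProperHyperideal Q ∧ ∀ l : List A, l.length = u → (∀ x ∈ l, ¬IsUnitH x) → hProd l ⊆ Q →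
    hProd (l.take v) ⊆ Q ∨ hProd (l.drop v) ⊆ Q

/-- A maximal hyperideal. -/
def IsMaximalHyperideal (M : Set A) : Prop :=
  IsProperHyperideal M ∧ ∀ B : Set A, IsHyperideal B → M ⊂ B → B = Set.univ

/-- `A` is local if it has exactly one maximal hyperideal. -/
def IsLocalH (A : Type*) [AddCommGroup A] [One A] [CommHyperring A] : Prop :=
  ∃! M : Set A, IsMaximalHyperideal M

/-- `P` is a prime hyperideal minimal over `Q`. -/
def MinimalPrimeOver (Q P : Set A) : Prop :=
  IsPrimeHyperideal P ∧ Q ⊆ P ∧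
    ∀ P' : Set A, IsPrimeHyperideal P' → Q ⊆ P' → P' ⊆ P → P' = P

/-- `Iⁿ = ⋃ {x₁∘⋯∘xₙ : xᵢ ∈ I}`. -/
def idealPow (I : Set A) (n : ℕ) : Set A :=
  ⋃ l ∈ {l : List A | l.length = n ∧ ∀ x ∈ l, x ∈ I}, hProd l

/-- `I₁∘⋯∘Iₙ = ⋃ {x₁∘⋯∘xₙ : xᵢ ∈ Iᵢ}`. -/
def idealProd (L : List (Set A)) : Set A :=
  ⋃ l ∈ {l : List A | List.Forall₂ (· ∈ ·) l L}, hProd l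

/-- `Abs(Q)`: the minimal `v` such that `Q` is `v`-absorbing. -/
noncomputable def AbsN (Q : Set A) : ℕ := sInf {v : ℕ | IsNAbsorbing Q v}

/-- `abs(Q)`: the minimal `v` such that `Q` is `(Abs(Q)+1, v)`-absorbing. -/
noncomputable def absN (Q : Set A) : ℕ := sInf {v : ℕ | IsUVAbsorbing Q (AbsN Q + 1) v}

/-- A primary hyperideal. -/
def IsPrimaryHyperideal (Q : Set A) : Prop :=
  IsProperHyperideal Q ∧ ∀ x y : A, hmul x y ⊆ Q → x ∈ Q ∨ ∃ t : ℕ, 1 ≤ t ∧ hPow y t ⊆ Q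

/-- `A` is a hyperfield if every nonzero element is a unit. -/
def IsHyperfield (A : Type*) [AddCommGroup A] [One A] [CommHyperring A] : Prop :=
  ∀ x : A, x ≠ 0 → IsUnitH x

/-- `(Q : x) = {a : a∘x ⊆ Q}`. -/
def colonH (Q : Set A) (x : A) : Set A := {a : A | hmul a x ⊆ Q}

/-- `J(A)`: the intersection of all maximal hyperideals of `A`. -/
def JacobsonH (A : Type*) [AddCommGroup A] [One A] [CommHyperring A] : Set A :=
  ⋂₀ {M : Set A | IsMaximalHyperideal M}


/-!
Primality always implies `(n,1)`-absorbing primality. Conversely, let `Q` be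
`(m+2,1)`-absorbing prime and `x∘y ⊆ Q` with `x, y` nonunits. If some product `x∘z₁∘⋯∘zₘ`
of nonunits escapes `Q`, absorbing primality applied to `y∘x∘z₁∘⋯∘zₘ ⊆ Q` puts `y` in `Q`.
Otherwise the factors `zᵢ` can be stripped off one at a time: since `A` is not local, there
are nonunits `a, b` with `a + b` a unit, and `t∘c ⊆ Q` for all nonunits `c` gives
`t∘(a+b) ⊆ t∘a + t∘b ⊆ Q`, hence `t ∈ Q`. So `x ∈ Q`.
-/

lemma hProd_cons {l : List A} (a : A) (hl : l ≠ []) :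
    hProd (a :: l) = ⋃ c ∈ hProd l, hmul a c := by
  cases l with
  | nil => exact absurd rfl hl
  | cons b t => rfl

lemma hProd_append_singleton (c : A) {l : List A} (hl : l ≠ []) :
    hProd (l ++ [c]) = ⋃ t ∈ hProd l, hmul t c := by
  induction l with
  | nil => exact absurd rfl hl
  | cons a l ih =>
    rcases eq_or_ne l [] with rfl | hl'
    · simp [hProd_cons a (List.cons_ne_nil c []), hProd]
    rw [List.cons_append, hProd_cons a (by simp), ih hl', hProd_cons a hl']
    ext s
    simp only [Set.mem_iUnion, exists_prop]
    constructor
    · rintro ⟨d, ⟨t, ht, hd⟩, hs⟩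
      have : s ∈ ⋃ d ∈ hmul t c, hmul a d := Set.mem_biUnion hd hs
      rw [hmul_assoc] at this
      obtain ⟨e, he, hs⟩ := Set.mem_iUnion₂.mp this
      exact ⟨e, ⟨t, ht, he⟩, hs⟩
    · rintro ⟨e, ⟨t, ht, he⟩, hs⟩
      have : s ∈ ⋃ e ∈ hmul a t, hmul e c := Set.mem_biUnion he hs
      rw [← hmul_assoc] at this
      obtain ⟨d, hd, hs⟩ := Set.mem_iUnion₂.mp this
      exact ⟨d, ⟨t, ht, hd⟩, hs⟩

lemma not_isUnitH_neg {a : A} (ha : ¬IsUnitH a) : ¬IsUnitH (-a) := by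
  rintro ⟨c, hc⟩
  rw [neg_hmul] at hc
  obtain ⟨d, hd, hd1⟩ := hc
  exact ha ⟨-c, by rw [hmul_neg]; exact ⟨d, hd, hd1⟩⟩

namespace IsHyperideal

variable {Q : Set A}

lemma zero_mem (hQ : IsHyperideal Q) : (0 : A) ∈ Q := by
  obtain ⟨q, hq⟩ := hQ.1
  simpa using hQ.2.1 q hq q hq

lemma add_mem (hQ : IsHyperideal Q) {p q : A} (hp : p ∈ Q) (hq : q ∈ Q) : p + q ∈ Q := by
  simpa using hQ.2.1 p hp (0 - q) (hQ.2.1 0 hQ.zero_mem q hq)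

lemma hmul_subset_of_mem (hQ : IsHyperideal Q) {q : A} (hq : q ∈ Q) (r : A) :
    hmul q r ⊆ Q := by
  rw [hmul_comm]
  exact hQ.2.2 r q hq

lemma mem_of_hmul_subset_of_isUnitH (hQ : IsHyperideal Q) {t w : A} (hw : IsUnitH w)
    (h : hmul t w ⊆ Q) : t ∈ Q := by
  obtain ⟨w', hw'⟩ := hw
  have : t ∈ ⋃ c ∈ hmul w w', hmul t c := Set.mem_biUnion hw' (one_mem t)
  rw [hmul_assoc] at this
  obtain ⟨s, hs, hts⟩ := Set.mem_iUnion₂.mp this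
  exact hQ.hmul_subset_of_mem (h hs) w' hts

lemma eq_univ_of_mem_of_isUnitH (hQ : IsHyperideal Q) {s : A} (hs : s ∈ Q)
    (hu : IsUnitH s) : Q = Set.univ := by
  obtain ⟨c, hc⟩ := hu
  have h1 : (1 : A) ∈ Q := hQ.hmul_subset_of_mem hs c hc
  exact Set.eq_univ_of_forall fun a => hQ.2.2 a 1 h1 (one_mem a)

lemma mem_of_forall_hmul_subset (hQ : IsHyperideal Q) {a b t : A} (ha : ¬IsUnitH a)
    (hb : ¬IsUnitH b) (hab : IsUnitH (a + b)) (h : ∀ c, ¬IsUnitH c → hmul t c ⊆ Q) :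
    t ∈ Q := by
  refine hQ.mem_of_hmul_subset_of_isUnitH hab fun s hs => ?_
  obtain ⟨p, hp, q, hq, rfl⟩ := hmul_add t a b hs
  exact hQ.add_mem (h a ha hp) (h b hb hq)

lemma mem_of_forall_hProd_cons_subset (hQ : IsHyperideal Q) {a b x : A} (ha : ¬IsUnitH a)
    (hb : ¬IsUnitH b) (hab : IsUnitH (a + b)) (m : ℕ)
    (h : ∀ z : List A, z.length = m → (∀ t ∈ z, ¬IsUnitH t) → hProd (x :: z) ⊆ Q) :
    x ∈ Q := by
  induction m with
  | zero => exact h [] rfl (by simp) rfl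
  | succ k ih =>
    refine ih fun z hz hzu t ht => hQ.mem_of_forall_hmul_subset ha hb hab fun c hc => ?_
    have hzc : hProd ((x :: z) ++ [c]) ⊆ Q :=
      h (z ++ [c]) (by simp [hz]) (by simpa [or_imp, forall_and] using ⟨hzu, hc⟩)
    rw [hProd_append_singleton c (List.cons_ne_nil x z)] at hzc
    exact fun s hs => hzc (Set.mem_biUnion ht hs)

lemma hProd_cons_cons_subset (hQ : IsHyperideal Q) {x y : A} (hxy : hmul x y ⊆ Q)
    (z : List A) : hProd (y :: x :: z) ⊆ Q := by
  rw [hProd_cons y (List.cons_ne_nil x z)]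
  rcases eq_or_ne z [] with rfl | hz
  · simpa [hProd, hmul_comm y x] using hxy
  rw [hProd_cons x hz]
  intro s hs
  obtain ⟨c, hc, hsc⟩ := Set.mem_iUnion₂.mp hs
  obtain ⟨d, hd, hcd⟩ := Set.mem_iUnion₂.mp hc
  have : s ∈ ⋃ c ∈ hmul x d, hmul y c := Set.mem_biUnion hcd hsc
  rw [hmul_assoc] at this
  obtain ⟨e, he, hse⟩ := Set.mem_iUnion₂.mp this
  exact hQ.hmul_subset_of_mem (hxy (by rwa [hmul_comm])) d hse

end IsHyperideal

lemma IsProperHyperideal.not_isUnitH {Q : Set A} (hQ : IsProperHyperideal Q) {s : A}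
    (hs : s ∈ Q) : ¬IsUnitH s :=
  fun hu => hQ.2 (hQ.1.eq_univ_of_mem_of_isUnitH hs hu)

lemma isMaximalHyperideal_nonunits (hne : ∃ x : A, ¬IsUnitH x)
    (hadd : ∀ a b : A, ¬IsUnitH a → ¬IsUnitH b → ¬IsUnitH (a + b)) :
    IsMaximalHyperideal {a : A | ¬IsUnitH a} := by
  refine ⟨⟨⟨hne, fun x hx y hy => ?_, fun r x hx s hs ⟨t, ht⟩ => ?_⟩, ?_⟩, ?_⟩
  · simpa [sub_eq_add_neg] using hadd x (-y) hx (not_isUnitH_neg hy)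
  · have : (1 : A) ∈ ⋃ b ∈ hmul x r, hmul b t := Set.mem_biUnion (by rwa [hmul_comm]) ht
    rw [← hmul_assoc] at this
    obtain ⟨c, -, hc⟩ := Set.mem_iUnion₂.mp this
    exact hx ⟨c, hc⟩
  · exact fun h => (h ▸ Set.mem_univ (1 : A)) ⟨1, one_mem 1⟩
  · intro B hB hNB
    obtain ⟨s, hsB, hsN⟩ := Set.exists_of_ssubset hNB
    exact hB.eq_univ_of_mem_of_isUnitH hsB (not_not.mp hsN)

lemma exists_nonunits_add_isUnitH (hA : ¬IsLocalH A) (hne : ∃ x : A, ¬IsUnitH x) :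
    ∃ a b : A, ¬IsUnitH a ∧ ¬IsUnitH b ∧ IsUnitH (a + b) := by
  by_contra! hadd
  have hN := isMaximalHyperideal_nonunits hne hadd
  refine hA ⟨_, hN, fun M hM => ?_⟩
  by_contra hne
  have hMN : M ⊂ {a : A | ¬IsUnitH a} :=
    LE.le.ssubset_of_ne (fun s hs => hM.1.not_isUnitH hs) hne
  exact hN.1.2 (hM.2 _ hN.1.1 hMN)

lemma IsPrimeHyperideal.isUVAbsorbingPrime_one {Q : Set A} (hQ : IsPrimeHyperideal Q)
    (n : ℕ) : IsUVAbsorbingPrime Q n 1 := by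
  refine ⟨hQ.1, fun l _ _ hl => ?_⟩
  rcases l with _ | ⟨a, t⟩
  · exact Or.inl hl
  rcases eq_or_ne t [] with rfl | ht
  · exact Or.inl hl
  by_cases htQ : hProd t ⊆ Q
  · exact Or.inr htQ
  obtain ⟨c, hc, hcQ⟩ := Set.not_subset.mp htQ
  have hac : hmul a c ⊆ Q := fun s hs =>
    hl (by rw [hProd_cons a ht]; exact Set.mem_biUnion hc hs)
  refine Or.inl ?_
  simpa [hProd] using (hQ.2 a c hac).resolve_right hcQ

lemma IsUVAbsorbingPrime.isPrimeHyperideal {Q : Set A} (hA : ¬IsLocalH A) (m : ℕ)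
    (hQ : IsUVAbsorbingPrime Q (m + 2) 1) : IsPrimeHyperideal Q := by
  obtain ⟨hprop, habs⟩ := hQ
  refine ⟨hprop, fun x y hxy => ?_⟩
  by_cases hxu : IsUnitH x
  · exact Or.inr (hprop.1.mem_of_hmul_subset_of_isUnitH hxu (by rwa [hmul_comm]))
  by_cases hyu : IsUnitH y
  · exact Or.inl (hprop.1.mem_of_hmul_subset_of_isUnitH hyu hxy)
  by_cases hall : ∀ z : List A, z.length = m → (∀ t ∈ z, ¬IsUnitH t) → hProd (x :: z) ⊆ Q
  · obtain ⟨a, b, ha, hb, hab⟩ := exists_nonunits_add_isUnitH hA ⟨x, hxu⟩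
    exact Or.inl (hprop.1.mem_of_forall_hProd_cons_subset ha hb hab m hall)
  push Not at hall
  obtain ⟨z, hzlen, hzu, hxz⟩ := hall
  have hnu : ∀ t ∈ y :: x :: z, ¬IsUnitH t := by
    simpa [or_imp, forall_and] using ⟨hyu, hxu, hzu⟩
  rcases habs (y :: x :: z) (by simp [hzlen]) hnu (hprop.1.hProd_cons_cons_subset hxy z)
    with hy | hxz'
  · exact Or.inr (by simpa [hProd] using hy)
  · exact absurd (by simpa using hxz') hxz

theorem uv_absorbing_prime_iff_prime_general (hA : ¬IsLocalH A) (Q : Set A)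
    (u v : ℕ) (hvu : v < u) :
    IsUVAbsorbingPrime Q (u - v + 1) 1 ↔ IsPrimeHyperideal Q := by
  obtain ⟨m, hm⟩ : ∃ m, u - v + 1 = m + 2 := ⟨u - v - 1, by omega⟩
  rw [hm]
  exact ⟨IsUVAbsorbingPrime.isPrimeHyperideal hA m, fun hQ => hQ.isUVAbsorbingPrime_one _⟩

/-- for a strong `𝒞`-hyperideal `Q` of a non-local hyperring and
`u > v`, `Q` is `(u-v+1,1)`-absorbing prime iff `Q` is prime. -/
theorem uv_absorbing_prime_iff_prime (hA : ¬IsLocalH A) (Q : Set A)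
    (hQ : IsStrongCHyperideal Q) (u v : ℕ) (hv : 1 ≤ v) (hvu : v < u) :
    IsUVAbsorbingPrime Q (u - v + 1) 1 ↔ IsPrimeHyperideal Q :=
  uv_absorbing_prime_iff_prime_general hA Q u v hvu
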